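/- arXiv:1106.4065 — 8 statements merged into one kernel-verified Lean document; each statement's English description precedes it below -/
import Mathlib

section
/- For n = 2m+1, define s(i,j) for 1 ≤ i < j ≤ 2m+1 by: s(i,j) = i if i ≤ m+1 and j - i ≤ m+1; s(i,j) = j - m - 1 if i ≤ m+1 and j - i ≥ m+2; s(i,j) = i - m - 1 if i ≥ m+2. Then for 1 ≤ t ≤ m the number of edges with s(i,j) = t is exactly 2m, and the number of edges with s(i,j) = m+1 is exactly m. -/
/-- Otsuki's sheet assignment for `K_{2m+1}`. -/
def oddSheet (m i j : ℕ) : ℕ :=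
  if i ≤ m + 1 ∧ j - i ≤ m + 1 then i
  else if i ≤ m + 1 then j - m - 1
  else i - m - 1

/-!
A full sheet `t ≤ m` consists of the `m + 1` edges `(t, j)` with `t < j ≤ t + m + 1`, the
`t - 1` edges `(i, t + m + 1)` with `i < t`, and the `m - t` edges `(t + m + 1, j)` with
`j > t + m + 1`: `2m` edges in all. On the half sheet `m + 1` only the `m` edges `(m + 1, j)`
survive, since vertex `2m + 2` does not exist.
-/

open Finset

def oddSheetEdges (m t : ℕ) : Finset (ℕ × ℕ) :=
  ((Icc 1 (2 * m + 1)) ×ˢ (Icc 1 (2 * m + 1))).filter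
    (fun p => p.1 < p.2 ∧ oddSheet m p.1 p.2 = t)

theorem oddSheet_eq_iff {m i j t : ℕ} (hij : i < j) (ht : 1 ≤ t) (htm : t ≤ m + 1) :
    oddSheet m i j = t ↔ (i = t ∧ j ≤ t + m + 1) ∨ (i < t ∧ j = t + m + 1) ∨ i = t + m + 1 := by
  unfold oddSheet
  split_ifs <;> omega

theorem mem_oddSheetEdges {m t i j : ℕ} (ht : 1 ≤ t) (htm : t ≤ m + 1) :
    (i, j) ∈ oddSheetEdges m t ↔ j ≤ 2 * m + 1 ∧
      ((i = t ∧ t < j ∧ j ≤ t + m + 1) ∨ (1 ≤ i ∧ i < t ∧ j = t + m + 1) ∨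
        (i = t + m + 1 ∧ i < j)) := by
  simp only [oddSheetEdges, mem_filter, mem_product, mem_Icc]
  constructor
  · rintro ⟨⟨⟨hi, -⟩, -, hj⟩, hij, h⟩
    rw [oddSheet_eq_iff hij ht htm] at h
    omega
  · intro h
    have hij : i < j := by omega
    exact ⟨by omega, hij, (oddSheet_eq_iff hij ht htm).2 (by omega)⟩

theorem oddSheetEdges_eq_of_le {m t : ℕ} (ht : 1 ≤ t) (htm : t ≤ m) :
    oddSheetEdges m t = ((Ioc t (t + m + 1)).image (t, ·) ∪ (Ico 1 t).image (·, t + m + 1)) ∪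
      (Ioc (t + m + 1) (2 * m + 1)).image (t + m + 1, ·) := by
  ext ⟨i, j⟩
  rw [mem_oddSheetEdges ht (by omega)]
  simp only [mem_union, mem_image, mem_Ioc, mem_Ico, Prod.mk.injEq, exists_eq_right_right,
    existsAndEq, true_and]
  omega

theorem oddSheetEdges_half (m : ℕ) :
    oddSheetEdges m (m + 1) = (Ioc (m + 1) (2 * m + 1)).image (m + 1, ·) := by
  ext ⟨i, j⟩
  rw [mem_oddSheetEdges le_add_self le_rfl]
  simp only [mem_image, mem_Ioc, Prod.mk.injEq, exists_eq_right_right]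
  omega

theorem card_oddSheetEdges_of_le {m t : ℕ} (ht : 1 ≤ t) (htm : t ≤ m) :
    #(oddSheetEdges m t) = 2 * m := by
  rw [oddSheetEdges_eq_of_le ht htm, card_union_of_disjoint, card_union_of_disjoint,
    card_image_of_injective _ (Prod.mk_right_injective _),
    card_image_of_injective _ (Prod.mk_left_injective _),
    card_image_of_injective _ (Prod.mk_right_injective _),
    Nat.card_Ioc, Nat.card_Ico, Nat.card_Ioc]
  · omega
  all_goals
    simp only [disjoint_left, mem_union, mem_image, mem_Ioc, mem_Ico, Prod.forall, Prod.mk.injEq,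
      not_exists, not_and, and_imp, exists_eq_right_right, existsAndEq, true_and]
    omega

theorem card_oddSheetEdges_half (m : ℕ) : #(oddSheetEdges m (m + 1)) = m := by
  rw [oddSheetEdges_half, card_image_of_injective _ (Prod.mk_right_injective _), Nat.card_Ioc]
  omega

theorem oddSheet_card_general (m : ℕ) :
    (∀ t, 1 ≤ t → t ≤ m →
      (((Finset.Icc 1 (2 * m + 1)) ×ˢ (Finset.Icc 1 (2 * m + 1))).filter
        (fun p => p.1 < p.2 ∧ oddSheet m p.1 p.2 = t)).card = 2 * m) ∧
    (((Finset.Icc 1 (2 * m + 1)) ×ˢ (Finset.Icc 1 (2 * m + 1))).filter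
      (fun p => p.1 < p.2 ∧ oddSheet m p.1 p.2 = m + 1)).card = m :=
  ⟨fun _ ht htm => card_oddSheetEdges_of_le ht htm, card_oddSheetEdges_half m⟩

/-- In the canonical book representation of `K_{2m+1}`, each sheet `t` with
`1 ≤ t ≤ m` contains exactly `2m` edges, and the half-sheet `m+1` contains
exactly `m` edges. -/
theorem oddSheet_card (m : ℕ) (hm : 1 ≤ m) :
    (∀ t, 1 ≤ t → t ≤ m →
      (((Finset.Icc 1 (2 * m + 1)) ×ˢ (Finset.Icc 1 (2 * m + 1))).filter
        (fun p => p.1 < p.2 ∧ oddSheet m p.1 p.2 = t)).card = 2 * m) ∧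
    (((Finset.Icc 1 (2 * m + 1)) ×ˢ (Finset.Icc 1 (2 * m + 1))).filter
      (fun p => p.1 < p.2 ∧ oddSheet m p.1 p.2 = m + 1)).card = m :=
  oddSheet_card_general m
end

section
/- Let n = 2m and let s be the sheet assignment on edges of K_{2m} defined by: s(i,j) = i if i ≤ m and j - i ≤ m; s(i,j) = j - m if i ≤ m and j - i ≥ m+1; s(i,j) = i - m if i ≥ m+1 (for i < j). If two edges (i,j) and (k,l) with i < k < j < l satisfy s(i,j) = s(k,l), then a contradiction follows; that is, no two crossing chords lie in the same sheet. -/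
/-!
Sheet `p` consists of the chords from `p` to a point of `(p, p + m]`, the chords from a point
before `p` to `p + m`, and the chords from `p + m` to a point after it. Two such chords either
share an endpoint or one of them lies within the arc of the other, so they never cross.
-/

/-- Otsuki's sheet assignment for `K_{2m}`. -/
def evenSheet (m i j : ℕ) : ℕ :=
  if i ≤ m ∧ j - i ≤ m then i
  else if i ≤ m then j - m
  else i - m

def sheetChords (m p : ℕ) : Set (ℕ × ℕ) :=
  {c | c.1 = p ∧ p < c.2 ∧ c.2 ≤ p + m} ∪ {c | c.1 < p ∧ c.2 = p + m} ∪
    {c | c.1 = p + m ∧ p + m < c.2}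

theorem mem_sheetChords_evenSheet {m i j : ℕ} (hij : i < j) :
    (i, j) ∈ sheetChords m (evenSheet m i j) := by
  simp only [sheetChords, evenSheet, Set.mem_union, Set.mem_ofPred_eq]
  split_ifs <;> omega

theorem not_crossing_of_mem_sheetChords {m p i j k l : ℕ} (hij : (i, j) ∈ sheetChords m p)
    (hkl : (k, l) ∈ sheetChords m p) : ¬(i < k ∧ k < j ∧ j < l) := by
  simp only [sheetChords, Set.mem_union, Set.mem_ofPred_eq] at hij hkl
  omega

theorem evenSheet_no_crossing_general (m i j k l : ℕ) (hik : i < k)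
    (hkj : k < j) (hjl : j < l)
    (h : evenSheet m i j = evenSheet m k l) : False := by
  have hij : (i, j) ∈ sheetChords m (evenSheet m i j) :=
    mem_sheetChords_evenSheet (hik.trans hkj)
  have hkl : (k, l) ∈ sheetChords m (evenSheet m i j) :=
    h ▸ mem_sheetChords_evenSheet (hkj.trans hjl)
  exact not_crossing_of_mem_sheetChords hij hkl ⟨hik, hkj, hjl⟩

/-- In the canonical book representation of `K_{2m}`, no two crossing chords
lie in the same sheet. -/
theorem evenSheet_no_crossing (m i j k l : ℕ) (hi : 1 ≤ i) (hik : i < k)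
    (hkj : k < j) (hjl : j < l) (hl : l ≤ 2 * m)
    (h : evenSheet m i j = evenSheet m k l) : False :=
  evenSheet_no_crossing_general m i j k l hik hkj hjl h
end

section
/- Let n = 2m+1 and let s be the sheet assignment on edges of K_{2m+1} defined by: s(i,j) = i if i ≤ m+1 and j - i ≤ m+1; s(i,j) = j - m - 1 if i ≤ m+1 and j - i ≥ m+2; s(i,j) = i - m - 1 if i ≥ m+2 (for i < j). Then no two crossing chords lie in the same sheet: if i < k < j < l then s(i,j) ≠ s(k,l). -/
def IsSheetChord (m s i j : ℕ) : Prop :=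
  (i = s ∧ j ≤ s + m + 1) ∨ (i < s ∧ j = s + m + 1) ∨ i = s + m + 1

theorem isSheetChord_oddSheet (m i j : ℕ) : IsSheetChord m (oddSheet m i j) i j := by
  unfold oddSheet IsSheetChord
  split_ifs <;> omega

theorem IsSheetChord.not_crossing {m s i j k l : ℕ} (hij : IsSheetChord m s i j)
    (hkl : IsSheetChord m s k l) (hik : i < k) (hkj : k < j) (hjl : j < l) : False := by
  unfold IsSheetChord at hij hkl
  omega

theorem oddSheet_no_crossing_general (m i j k l : ℕ) (hik : i < k)
    (hkj : k < j) (hjl : j < l) :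
    oddSheet m i j ≠ oddSheet m k l := fun hsheet =>
  (isSheetChord_oddSheet m i j).not_crossing (hsheet ▸ isSheetChord_oddSheet m k l) hik hkj hjl

/-- In the canonical book representation of `K_{2m+1}`, no two crossing chords
lie in the same sheet. -/
theorem oddSheet_no_crossing (m i j k l : ℕ) (hi : 1 ≤ i) (hik : i < k)
    (hkj : k < j) (hjl : j < l) (hl : l ≤ 2 * m + 1) :
    oddSheet m i j ≠ oddSheet m k l :=
  oddSheet_no_crossing_general m i j k l hik hkj hjl
end

section
/- The edges of the complete graph K_n, drawn as chords of a convex n-gon, can be colored with ⌈n/2⌉ colors so that any two crossing chords receive distinct colors, and this is impossible with fewer than ⌈n/2⌉ colors. -/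
/-- Chords `(i,j)` and `(k,l)` of the convex `n`-gon cross. -/
def Crosses (i j k l : ℕ) : Prop :=
  (i < k ∧ k < j ∧ j < l) ∨ (k < i ∧ i < l ∧ l < j)

/-!
Upper bound: colour the chord `(i, j)` by `((i + j) mod n) / 2`. The chords with vertex sums
`2a` and `2a + 1` (mod `n`) form the zigzag path `a, a + 1, a - 1, a + 2, a - 2, …`, which has no
crossings.

Lower bound: a colour class is a set of pairwise non-crossing chords. For `n = 2m` the `m`
diameters cross pairwise, so they need `m` colours. For `n = 2m + 1` the `2m + 1` longest chords
cross unless they are cyclically consecutive, so a colour class holds at most two of them and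
`m + 1` colours are needed.
-/

open Finset

def IsSheetColoring {α : Type*} (n : ℕ) (c : ℕ → ℕ → α) : Prop :=
  ∀ i j k l, 1 ≤ i → i < j → j ≤ n → 1 ≤ k → k < l → l ≤ n → Crosses i j k l → c i j ≠ c k l

theorem IsSheetColoring.of_comp {α β : Type*} {n : ℕ} {c : ℕ → ℕ → α} (f : α → β)
    (h : IsSheetColoring n fun i j => f (c i j)) : IsSheetColoring n c :=
  fun i j k l hi hij hj hk hkl hl hx hc => h i j k l hi hij hj hk hkl hl hx (congrArg f hc)

theorem Nat.mod_eq_self_or_add_eq {a n : ℕ} (h : a < 2 * n) : a % n = a ∨ a % n + n = a := by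
  rcases Nat.lt_or_ge a n with ha | ha
  · exact .inl (Nat.mod_eq_of_lt ha)
  · exact .inr (by rw [Nat.mod_eq_sub_mod ha, Nat.mod_eq_of_lt (by omega)]; omega)

theorem isSheetColoring_add_mod_div_two (n : ℕ) :
    IsSheetColoring n fun i j => (i + j) % n / 2 := by
  intro i j k l hi hij hj hk hkl hl hx
  dsimp only
  rcases Nat.mod_eq_self_or_add_eq (a := i + j) (n := n) (by omega) with h₁ | h₁ <;>
  rcases Nat.mod_eq_self_or_add_eq (a := k + l) (n := n) (by omega) with h₂ | h₂ <;>
  unfold Crosses at hx <;> omega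

theorem card_le_mul_of_isSheetColoring {α ι : Type*} [Fintype α] {n q : ℕ} {c : ℕ → ℕ → α}
    (hc : IsSheetColoring n c) (S : Finset ι) (chord : ι → ℕ × ℕ)
    (hchord : ∀ t ∈ S, 1 ≤ (chord t).1 ∧ (chord t).1 < (chord t).2 ∧ (chord t).2 ≤ n)
    (hq : ∀ T ⊆ S, (T : Set ι).Pairwise
      (fun t t' => ¬ Crosses (chord t).1 (chord t).2 (chord t').1 (chord t').2) → #T ≤ q) :
    #S ≤ q * Fintype.card α := by
  classical
  refine card_le_mul_card_image_of_maps_to (f := fun t => c (chord t).1 (chord t).2)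
    (fun _ _ => mem_univ _) q fun y _ => hq _ (filter_subset _ _) ?_
  intro t ht t' ht' _ hx
  simp only [coe_filter, Set.mem_ofPred_eq] at ht ht'
  obtain ⟨h₁, h₂, h₃⟩ := hchord t ht.1
  obtain ⟨h₄, h₅, h₆⟩ := hchord t' ht'.1
  exact hc _ _ _ _ h₁ h₂ h₃ h₄ h₅ h₆ hx (ht.2.trans ht'.2.symm)

theorem le_card_of_isSheetColoring_even {α : Type*} [Fintype α] {m : ℕ} {c : ℕ → ℕ → α}
    (hc : IsSheetColoring (2 * m) c) : m ≤ Fintype.card α := by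
  suffices #(range m) ≤ 1 * Fintype.card α by simpa using this
  refine card_le_mul_of_isSheetColoring hc _ (fun t => (t + 1, t + 1 + m))
    (fun t ht => ?_) fun T hT hfree => card_le_one.2 fun t ht t' ht' => ?_
  · simp only [mem_range] at ht
    omega
  · by_contra hne
    have := mem_range.1 (hT ht)
    have := mem_range.1 (hT ht')
    exact hfree ht ht' hne (by unfold Crosses; omega)

theorem lt_card_of_isSheetColoring_odd {α : Type*} [Fintype α] {m : ℕ} (hm : 2 ≤ m)
    {c : ℕ → ℕ → α} (hc : IsSheetColoring (2 * m + 1) c) : m < Fintype.card α := by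
  suffices #(range (2 * m + 1)) ≤ 2 * Fintype.card α by simp only [card_range] at this; omega
  -- `t ↦ (⌊t/2⌋ + 1, ⌈t/2⌉ + m + 1)` lists the longest chords in cyclic order.
  refine card_le_mul_of_isSheetColoring hc _ (fun t => (t / 2 + 1, (t + 1) / 2 + m + 1))
    (fun t ht => ?_) fun T hT hfree => ?_
  · simp only [mem_range] at ht
    omega
  · by_contra! hT₃
    obtain ⟨a, ha, b, hb, d, hd, hab, had, hbd⟩ := two_lt_card.1 hT₃
    have := mem_range.1 (hT ha)
    have := mem_range.1 (hT hb)
    have := mem_range.1 (hT hd)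
    have hab' := hfree ha hb hab
    have had' := hfree ha hd had
    have hbd' := hfree hb hd hbd
    simp only [Crosses] at hab' had' hbd'
    omega

/-- The edges of `K_n`, drawn as chords of a convex `n`-gon, can be colored with
`⌈n/2⌉` colors so that crossing chords get distinct colors, and this is
impossible with fewer colors: the sheet-number of `K_n` is `⌈n/2⌉`. -/
theorem sheetNumber_complete_graph (n : ℕ) (hn : 4 ≤ n) :
    (∃ c : ℕ → ℕ → Fin ((n + 1) / 2),
      ∀ i j k l, 1 ≤ i → i < j → j ≤ n → 1 ≤ k → k < l → l ≤ n →
        Crosses i j k l → c i j ≠ c k l) ∧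
    (∀ r : ℕ, r < (n + 1) / 2 →
      ¬ ∃ c : ℕ → ℕ → Fin r,
        ∀ i j k l, 1 ≤ i → i < j → j ≤ n → 1 ≤ k → k < l → l ≤ n →
          Crosses i j k l → c i j ≠ c k l) := by
  refine ⟨⟨fun i j => ⟨(i + j) % n / 2, ?_⟩, (isSheetColoring_add_mod_div_two n).of_comp Fin.val⟩,
    fun r hr ⟨c, hc⟩ => ?_⟩
  · have := Nat.mod_lt (i + j) (by omega : 0 < n)
    omega
  · obtain ⟨m, rfl | rfl⟩ := Nat.even_or_odd' n
    · have := le_card_of_isSheetColoring_even hc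
      simp only [Fintype.card_fin] at this
      omega
    · have := lt_card_of_isSheetColoring_odd (by omega) hc
      simp only [Fintype.card_fin] at this
      omega
end

section
/- Let n = 2m and let s be Otsuki's sheet assignment on edges of K_{2m} (s(i,j) = i if i ≤ m and j-i ≤ m; s(i,j) = j-m if i ≤ m and j-i ≥ m+1; s(i,j) = i-m if i ≥ m+1, for i < j). Then for all i < j with j ≥ i+2 and i ≤ 2m-1, the sheet indices s(i,j) and s(i+1,j) differ by at most 1, or one of them equals 1 while the other equals m (i.e., they are cyclically consecutive in Z/m). -/
namespace evenSheet

variable {m i j : ℕ}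

theorem of_le_of_sub_le (hi : i ≤ m) (hji : j - i ≤ m) : evenSheet m i j = i := by
  simp [evenSheet, hi, hji]

theorem of_le_of_lt_sub (hi : i ≤ m) (hji : m < j - i) : evenSheet m i j = j - m := by
  simp [evenSheet, hi, hji.not_ge]

theorem of_lt (hi : m < i) : evenSheet m i j = i - m := by
  simp [evenSheet, hi.not_ge]

theorem succ_of_lt (hi : m < i) : evenSheet m (i + 1) j = evenSheet m i j + 1 := by
  rw [of_lt hi, of_lt (Nat.lt_succ_of_lt hi)]
  omega

theorem self_of_le (hj : j ≤ 2 * m) : evenSheet m m j = m :=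
  of_le_of_sub_le le_rfl (by omega)

theorem succ_self : evenSheet m (m + 1) j = 1 := by
  rw [of_lt (Nat.lt_succ_self m)]
  omega

theorem succ_of_lt_eq_or_eq_succ (hi : i < m) :
    evenSheet m (i + 1) j = evenSheet m i j ∨ evenSheet m (i + 1) j = evenSheet m i j + 1 := by
  by_cases hji : j - i ≤ m
  · rw [of_le_of_sub_le hi.le hji, of_le_of_sub_le hi (by omega)]
    exact .inr rfl
  rw [of_le_of_lt_sub hi.le (by omega)]
  by_cases hji' : j - (i + 1) ≤ m
  · rw [of_le_of_sub_le hi hji']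
    omega
  · rw [of_le_of_lt_sub hi (by omega)]
    exact .inl rfl

end evenSheet

theorem evenSheet_adjacent_general (m i j : ℕ) (hj : j ≤ 2 * m) :
    (evenSheet m i j ≤ evenSheet m (i + 1) j + 1 ∧
      evenSheet m (i + 1) j ≤ evenSheet m i j + 1) ∨
    (evenSheet m i j = 1 ∧ evenSheet m (i + 1) j = m) ∨
    (evenSheet m i j = m ∧ evenSheet m (i + 1) j = 1) := by
  rcases lt_trichotomy i m with hi | rfl | hi
  · left
    rcases evenSheet.succ_of_lt_eq_or_eq_succ (j := j) hi with h | h <;> omega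
  · exact .inr (.inr ⟨evenSheet.self_of_le hj, evenSheet.succ_self⟩)
  · left
    have := evenSheet.succ_of_lt (j := j) hi
    omega

/-- In the canonical book representation of `K_{2m}`, the sheets of the edges
`(i,j)` and `(i+1,j)` differ by at most one, or are the cyclically consecutive
pair `{1, m}`. -/
theorem evenSheet_adjacent (m i j : ℕ) (hm : 1 ≤ m) (hi : 1 ≤ i)
    (hij : i + 2 ≤ j) (hj : j ≤ 2 * m) (hi' : i ≤ 2 * m - 1) :
    (evenSheet m i j ≤ evenSheet m (i + 1) j + 1 ∧
      evenSheet m (i + 1) j ≤ evenSheet m i j + 1) ∨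
    (evenSheet m i j = 1 ∧ evenSheet m (i + 1) j = m) ∨
    (evenSheet m i j = m ∧ evenSheet m (i + 1) j = 1) :=
  evenSheet_adjacent_general m i j hj
end

section
/- Let n = 2m+1 and let s be Otsuki's sheet assignment on edges of K_{2m+1} (s(i,j) = i if i ≤ m+1 and j-i ≤ m+1; s(i,j) = j-m-1 if i ≤ m+1 and j-i ≥ m+2; s(i,j) = i-m-1 if i ≥ m+2, for i < j). Then for all i < j with j ≥ i+2, the sheet indices s(i,j) and s(i+1,j) are equal, differ by exactly 1, or are the pair {1, m+1}. -/
theorem oddSheet_adjacent_general (m i j : ℕ) (hj : j ≤ 2 * m + 1) :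
    (oddSheet m i j = oddSheet m (i + 1) j) ∨
    (oddSheet m i j + 1 = oddSheet m (i + 1) j) ∨
    (oddSheet m (i + 1) j + 1 = oddSheet m i j) ∨
    (oddSheet m i j = 1 ∧ oddSheet m (i + 1) j = m + 1) ∨
    (oddSheet m i j = m + 1 ∧ oddSheet m (i + 1) j = 1) := by
  unfold oddSheet
  split_ifs <;> omega

/-- In the canonical book representation of `K_{2m+1}`, the sheets of the edges
`(i,j)` and `(i+1,j)` are equal, differ by exactly one, or are the cyclically
consecutive pair `{1, m+1}`. -/
theorem oddSheet_adjacent (m i j : ℕ) (hm : 1 ≤ m) (hi : 1 ≤ i)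
    (hij : i + 2 ≤ j) (hj : j ≤ 2 * m + 1) :
    (oddSheet m i j = oddSheet m (i + 1) j) ∨
    (oddSheet m i j + 1 = oddSheet m (i + 1) j) ∨
    (oddSheet m (i + 1) j + 1 = oddSheet m i j) ∨
    (oddSheet m i j = 1 ∧ oddSheet m (i + 1) j = m + 1) ∨
    (oddSheet m i j = m + 1 ∧ oddSheet m (i + 1) j = 1) :=
  oddSheet_adjacent_general m i j hj
end

section
/- For every p ≥ 2, in the braid group B_p with Artin generators σ₁,...,σ_{p-1}, the word (σ₁σ₂⋯σ_{p-1}) · (σ₁⋯σ_{p-2})σ_{p-1}⁻¹ · (σ₁⋯σ_{p-3})σ_{p-2}⁻¹σ_{p-1}⁻¹ · ⋯ · σ₁⁻¹σ₂⁻¹⋯σ_{p-1}⁻¹ equals the identity; here the k-th factor (for k = 0,...,p-1) is (σ₁⋯σ_{p-1-k})·(σ_{p-k}⁻¹σ_{p-k+1}⁻¹⋯σ_{p-1}⁻¹). -/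
/-!
Write `A_m = σ₁ ⋯ σ_m` and `D_k = σ_{p-1} ⋯ σ_{p-k}`, so that the `k`-th factor is
`A_{p-1-k} D_k⁻¹`. The letters of `D_k` are at distance at least two from those of every later
`A_{p-1-j}`, so all the `D_k⁻¹` can be moved to the right and the word becomes
`(A_{p-1} ⋯ A_1) (D_{p-1} ⋯ D_1)⁻¹`. Both products are Garside's half twist `Δ`: each satisfies
`Δ_{m+1} = Δ_m · R_{m+1}` with `R_{m+1} = σ_{m+1} ⋯ σ₁`. For the first product this only needs
`σ_{m+1}` to commute with `Δ_{m-1}`. The second one is by construction `R_{m+1} · Δ'_m`, where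
`Δ'_m` is the same word with all indices raised by one, and the braid relations give
`R_{m+1} σ_{i+1} = σ_i R_{m+1}` for `1 ≤ i ≤ m`, hence `R_{m+1} Δ'_m = Δ_m R_{m+1}`.
-/

theorem List.prod_map_mul_of_pairwise_commute {ι M : Type*} [Monoid M] {f g : ι → M} :
    ∀ {l : List ι}, l.Pairwise (fun i j => Commute (g i) (f j)) →
      (l.map fun i => f i * g i).prod = (l.map f).prod * (l.map g).prod
  | [], _ => by simp
  | i :: l, hl => by
    obtain ⟨hi, hl⟩ := List.pairwise_cons.mp hl
    have hcomm : Commute (g i) (l.map f).prod :=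
      Commute.list_prod_right _ _ (by simpa using hi)
    simp only [List.map_cons, List.prod_cons, prod_map_mul_of_pairwise_commute hl, mul_assoc,
      hcomm.left_comm]

namespace ArtinBraid

variable {M : Type*} [Monoid M]

/-- Zero-based: `τ i` plays the role of `σ_{i+1}`, so these are the relations of `B_{n+1}`. -/
structure BraidRelations (τ : ℕ → M) (n : ℕ) : Prop where
  braid : ∀ i, i + 2 ≤ n → τ i * τ (i + 1) * τ i = τ (i + 1) * τ i * τ (i + 1)
  commute : ∀ i j, i + 2 ≤ j → j < n → Commute (τ i) (τ j)

variable {τ : ℕ → M} {m n : ℕ}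

theorem BraidRelations.mono (h : BraidRelations τ n) (hmn : m ≤ n) :
    BraidRelations τ m :=
  ⟨fun i hi => h.braid i (by omega), fun i j hij hj => h.commute i j hij (by omega)⟩

def asc (τ : ℕ → M) (m : ℕ) : M := ((List.range m).map τ).prod

def desc (τ : ℕ → M) (m : ℕ) : M := ((List.range m).map τ).reverse.prod

def lowerGarside (τ : ℕ → M) (n : ℕ) : M :=
  ((List.range (n + 1)).map fun k => asc τ (n - k)).prod

def upperGarside : (ℕ → M) → ℕ → M
  | _, 0 => 1
  | τ, n + 1 => desc τ (n + 1) * upperGarside (fun i => τ (i + 1)) n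

theorem asc_succ : asc τ (m + 1) = asc τ m * τ m := List.prod_range_succ τ m

theorem desc_succ : desc τ (m + 1) = τ m * desc τ m := by
  simp [desc, List.range_succ]

theorem lowerGarside_succ : lowerGarside τ (n + 1) = asc τ (n + 1) * lowerGarside τ n := by
  simp only [lowerGarside, List.range_succ_eq_map (n := n + 1), List.map_cons, List.map_map,
    List.prod_cons, Nat.sub_zero, Function.comp_def, Nat.succ_eq_add_one, Nat.add_sub_add_right]

theorem commute_asc {x : M} (h : ∀ i < m, Commute (τ i) x) : Commute (asc τ m) x :=
  Commute.list_prod_left _ _ (by simpa using h)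

theorem commute_desc {x : M} (h : ∀ i < m, Commute x (τ i)) : Commute x (desc τ m) :=
  Commute.list_prod_right _ _ (by simpa using h)

theorem commute_lowerGarside {x : M} (h : ∀ i < n, Commute (τ i) x) :
    Commute (lowerGarside τ n) x :=
  Commute.list_prod_left _ _ <| by
    simp only [List.mem_map, List.mem_range, forall_exists_index, and_imp]
    rintro _ k - rfl
    exact commute_asc fun i hi => h i (by omega)

theorem semiconjBy_desc_shift {R : M} (h : ∀ i < m, SemiconjBy R (τ (i + 1)) (τ i)) :
    SemiconjBy R (desc (fun i => τ (i + 1)) m) (desc τ m) := by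
  induction m with
  | zero => exact SemiconjBy.one_right R
  | succ m ih =>
    rw [desc_succ, desc_succ]
    exact (h m m.lt_succ_self).mul_right (ih fun i hi => h i (by omega))

theorem semiconjBy_upperGarside_shift {R : M} (h : ∀ i < n, SemiconjBy R (τ (i + 1)) (τ i)) :
    SemiconjBy R (upperGarside (fun i => τ (i + 1)) n) (upperGarside τ n) := by
  induction n generalizing τ with
  | zero => exact SemiconjBy.one_right R
  | succ n ih =>
    exact (semiconjBy_desc_shift h).mul_right
      (ih (τ := fun i => τ (i + 1)) fun i hi => h (i + 1) (by omega))

theorem BraidRelations.semiconjBy_desc {j : ℕ} (h : BraidRelations τ m) (hj : j + 1 < m) :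
    SemiconjBy (desc τ m) (τ (j + 1)) (τ j) := by
  induction m with
  | zero => omega
  | succ m ih =>
    unfold SemiconjBy
    rcases Nat.lt_or_ge (j + 1) m with hjm | hjm
    · calc desc τ (m + 1) * τ (j + 1) = τ m * (τ j * desc τ m) := by
            rw [desc_succ, mul_assoc, (ih (h.mono m.le_succ) hjm).eq]
        _ = τ j * desc τ (m + 1) := by
            rw [desc_succ, ← mul_assoc, ← mul_assoc, (h.commute j m (by omega) (by omega)).eq]
    · obtain rfl : m = j + 1 := by omega
      have hc : Commute (τ (j + 1)) (desc τ j) :=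
        commute_desc fun i hi => (h.commute i (j + 1) (by omega) (by omega)).symm
      simp only [desc_succ, mul_assoc]
      rw [← hc.eq]
      simp only [← mul_assoc]
      rw [h.braid j le_rfl]

theorem BraidRelations.lowerGarside_succ_eq_mul_desc (h : BraidRelations τ (n + 1)) :
    lowerGarside τ (n + 1) = lowerGarside τ n * desc τ (n + 1) := by
  induction n with
  | zero => simp [lowerGarside, asc, desc, List.range_succ]
  | succ n ih =>
    have hc : Commute (τ (n + 1)) (lowerGarside τ n) :=
      (commute_lowerGarside fun i hi => h.commute i (n + 1) (by omega) (by omega)).symm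
    calc lowerGarside τ (n + 2)
          = asc τ (n + 1) * (τ (n + 1) * (lowerGarside τ n * desc τ (n + 1))) := by
          rw [lowerGarside_succ, ih (h.mono (by omega)), asc_succ, mul_assoc]
      _ = asc τ (n + 1) * (lowerGarside τ n * (τ (n + 1) * desc τ (n + 1))) := by
          rw [hc.left_comm]
      _ = lowerGarside τ (n + 1) * desc τ (n + 2) := by
          rw [lowerGarside_succ, desc_succ (m := n + 1), mul_assoc]

theorem BraidRelations.upperGarside_succ_eq_mul_desc (h : BraidRelations τ (n + 1)) :
    upperGarside τ (n + 1) = upperGarside τ n * desc τ (n + 1) :=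
  semiconjBy_upperGarside_shift fun _ hi => h.semiconjBy_desc (by omega)

theorem BraidRelations.lowerGarside_eq_upperGarside (h : BraidRelations τ n) :
    lowerGarside τ n = upperGarside τ n := by
  induction n with
  | zero => simp [lowerGarside, upperGarside, asc]
  | succ n ih =>
    rw [h.lowerGarside_succ_eq_mul_desc, h.upperGarside_succ_eq_mul_desc, ih (h.mono n.le_succ)]

theorem upperGarside_eq_prod_reverse :
    upperGarside τ n =
      ((List.range (n + 1)).map fun k => desc (fun t => τ (n - k + t)) k).reverse.prod := by
  induction n generalizing τ with
  | zero => simp [upperGarside, desc]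
  | succ n ih =>
    rw [upperGarside, ih, List.range_succ (n := n + 1), List.map_append, List.reverse_append,
      List.prod_append]
    simp only [Nat.sub_self, zero_add, List.map_cons, List.map_nil, List.reverse_cons,
      List.reverse_nil, List.nil_append, List.prod_cons, List.prod_nil, mul_one]
    congr 3
    refine List.map_congr_left fun k hk => ?_
    have : k ≤ n := Nat.lt_succ_iff.mp (List.mem_range.mp hk)
    congr 1
    funext t
    congr 1
    omega

section Group

variable {G : Type*} [Group G] {τ : ℕ → G} {n : ℕ}

theorem desc_inv (k : ℕ) : (desc τ k)⁻¹ = ((List.range k).map fun t => (τ t)⁻¹).prod := by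
  simp [desc, List.prod_inv_reverse, List.map_reverse, Function.comp_def]

theorem BraidRelations.prod_asc_mul_inv_desc_eq_one (h : BraidRelations τ n) :
    ((List.range (n + 1)).map fun k =>
      asc τ (n - k) * (desc (fun t => τ (n - k + t)) k)⁻¹).prod = 1 := by
  have hcomm : (List.range (n + 1)).Pairwise fun k j =>
      Commute (desc (fun t => τ (n - k + t)) k)⁻¹ (asc τ (n - j)) :=
    List.pairwise_lt_range.imp_of_mem fun {k j} _ hj hkj =>
      have hj : j < n + 1 := List.mem_range.mp hj
      (commute_asc fun i _ => commute_desc fun t _ =>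
        h.commute i (n - k + t) (by omega) (by omega)).symm.inv_left
  rw [List.prod_map_mul_of_pairwise_commute hcomm, ← lowerGarside, h.lowerGarside_eq_upperGarside,
    upperGarside_eq_prod_reverse, List.prod_reverse_noncomm, List.map_map]
  exact inv_mul_cancel _

end Group

end ArtinBraid

open ArtinBraid in
theorem braid_word_Bp_general {G : Type*} [Group G] (p : ℕ) (σ : ℕ → G)
    (hbraid : ∀ i, 1 ≤ i → i ≤ p - 2 → σ i * σ (i + 1) * σ i = σ (i + 1) * σ i * σ (i + 1))
    (hcomm : ∀ i j, 1 ≤ i → i ≤ p - 1 → 1 ≤ j → j ≤ p - 1 → i + 2 ≤ j →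
      σ i * σ j = σ j * σ i) :
    ((List.range p).map (fun k =>
      ((List.range (p - 1 - k)).map (fun t => σ (t + 1))).prod *
      ((List.range k).map (fun t => (σ (p - k + t))⁻¹)).prod)).prod = 1 := by
  cases p with
  | zero => rfl
  | succ n =>
    have hτ : BraidRelations (fun i => σ (i + 1)) n :=
      ⟨fun i _ => hbraid (i + 1) (by omega) (by omega), fun i j _ _ =>
        hcomm (i + 1) (j + 1) (by omega) (by omega) (by omega) (by omega) (by omega)⟩
    rw [← hτ.prod_asc_mul_inv_desc_eq_one]
    refine congrArg List.prod (List.map_congr_left fun k hk => ?_)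
    have hk : k ≤ n := Nat.lt_succ_iff.mp (List.mem_range.mp hk)
    rw [desc_inv, asc, Nat.add_sub_cancel]
    congr 3
    funext t
    congr 2
    omega

/-- In the braid group `B_p` (equivalently, in any group whose elements
`σ 1, ..., σ (p-1)` satisfy the braid relations), the word
`(σ₁⋯σ_{p-1}) · (σ₁⋯σ_{p-2})σ_{p-1}⁻¹ · ⋯ · σ₁⁻¹σ₂⁻¹⋯σ_{p-1}⁻¹`,
whose `k`-th factor (for `k = 0, ..., p-1`) is
`(σ₁⋯σ_{p-1-k})·(σ_{p-k}⁻¹⋯σ_{p-1}⁻¹)`, is the identity. -/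
theorem braid_word_Bp {G : Type*} [Group G] (p : ℕ) (hp : 2 ≤ p) (σ : ℕ → G)
    (hbraid : ∀ i, 1 ≤ i → i ≤ p - 2 → σ i * σ (i + 1) * σ i = σ (i + 1) * σ i * σ (i + 1))
    (hcomm : ∀ i j, 1 ≤ i → i ≤ p - 1 → 1 ≤ j → j ≤ p - 1 → i + 2 ≤ j →
      σ i * σ j = σ j * σ i) :
    ((List.range p).map (fun k =>
      ((List.range (p - 1 - k)).map (fun t => σ (t + 1))).prod *
      ((List.range k).map (fun t => (σ (p - k + t))⁻¹)).prod)).prod = 1 :=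
  braid_word_Bp_general p σ hbraid hcomm
end

section
/- Let n = 2m and define, for edges (i,j) and (k,l) of K_{2m} with 1 ≤ i < k < j < l ≤ 2m, the relation '(k,l) is over (i,j)' to hold iff i ≤ m and k ≥ m+1, and '(i,j) is over (k,l)' otherwise. Then this over-relation is consistent with the sheet assignment s of Otsuki's canonical book representation: (k,l) is over (i,j) if and only if s(k,l) < s(i,j), where s(i,j) = i if i ≤ m and j-i ≤ m; s(i,j) = j-m if i ≤ m and j-i ≥ m+1; s(i,j) = i-m if i ≥ m+1. -/
namespace evenSheet

variable {m i j k l : ℕ}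

theorem eq_max_of_le (j : ℕ) (hi : i ≤ m) : evenSheet m i j = max i (j - m) := by
  unfold evenSheet
  split_ifs <;> omega

theorem eq_sub_of_lt (j : ℕ) (hi : m < i) : evenSheet m i j = i - m := by
  unfold evenSheet
  split_ifs <;> omega

theorem le_of_le_of_le (hk : k ≤ m) (hik : i ≤ k) (hjl : j ≤ l) :
    evenSheet m i j ≤ evenSheet m k l := by
  rw [eq_max_of_le j (hik.trans hk), eq_max_of_le l hk]
  exact max_le_max hik (Nat.sub_le_sub_right hjl m)

theorem lt_of_lt_of_lt (hi : m < i) (hik : i < k) : evenSheet m i j < evenSheet m k l := by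
  rw [eq_sub_of_lt j hi, eq_sub_of_lt l (hi.trans hik)]
  omega

theorem lt_of_le_of_lt (hi : i ≤ m) (hk : m < k) (hkj : k < j) :
    evenSheet m k l < evenSheet m i j := by
  rw [eq_sub_of_lt l hk, eq_max_of_le j hi]
  exact lt_max_of_lt_right (by omega)

end evenSheet

theorem evenSheet_over_iff_general (m i j k l : ℕ) (hik : i < k)
    (hkj : k < j) (hjl : j < l) :
    (i ≤ m ∧ m + 1 ≤ k) ↔ evenSheet m k l < evenSheet m i j := by
  constructor
  · rintro ⟨hi, hk⟩
    exact evenSheet.lt_of_le_of_lt hi hk hkj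
  · intro hlt
    by_contra hnot
    rcases le_or_gt k m with hk | hk
    · exact (evenSheet.le_of_le_of_le hk hik.le hjl.le).not_gt hlt
    · have hi : m < i := by omega
      exact (evenSheet.lt_of_lt_of_lt hi hik).asymm hlt

/-- For crossing chords `i < k < j < l` in the canonical book representation of
`K_{2m}`, the edge `(k,l)` passes over the edge `(i,j)` (i.e. `i ≤ m` and
`k ≥ m+1`) if and only if `(k,l)` lies in a lower-indexed sheet. -/
theorem evenSheet_over_iff (m i j k l : ℕ) (hi : 1 ≤ i) (hik : i < k)
    (hkj : k < j) (hjl : j < l) (hl : l ≤ 2 * m) :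
    (i ≤ m ∧ m + 1 ≤ k) ↔ evenSheet m k l < evenSheet m i j :=
  evenSheet_over_iff_general m i j k l hik hkj hjl
end
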